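/- For every w ∈ ℂ with |w| < R = 1/(1-q), the series E_q(-w) := Σ_{n=0}^∞ (-1)^n q^{n(n-1)/2} w^n/[n]_q! converges absolutely and e_q(w) · E_q(-w) = 1; that is, the second q-exponential series provides a multiplicative inverse of e_q on the disc of convergence. -/

import Mathlib

open scoped BigOperators

/-- The q-number `[n]_q = (1 - q^n)/(1 - q)`. -/
noncomputable def qnum (q : ℝ) (n : ℕ) : ℝ := (1 - q ^ n) / (1 - q)

/-- The q-factorial `[n]_q! = [1]_q [2]_q ⋯ [n]_q`, with `[0]_q! = 1`. -/
noncomputable def qfact (q : ℝ) : ℕ → ℝ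
  | 0 => 1
  | n + 1 => qfact q n * qnum q (n + 1)

/-- The complex q-exponential `e_q(w) = ∑ w^n/[n]_q!`. -/
noncomputable def qexC (q : ℝ) (w : ℂ) : ℂ := ∑' n : ℕ, w ^ n / (qfact q n : ℂ)

/-- The real q-exponential `e_q(x) = ∑ x^n/[n]_q!`. -/
noncomputable def qexR (q : ℝ) (x : ℝ) : ℝ := ∑' n : ℕ, x ^ n / qfact q n

/-! Multiply the two series as a Cauchy product. For `n ≥ 1` the coefficient of `w^n` is
`∑ₖ (-1)^k q^(k(k-1)/2) / ([k]! [n-k]!)`, which vanishes: multiplied by `[n]`, and with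
`[n] = [k] + q^k [n-k]`, it telescopes. Absolute convergence follows from the ratio test,
as `[n]_q → 1/(1-q)`, and the second series is dominated termwise by `e_q(|w|)`. -/

open Filter Topology Finset

section QFactorial

variable {q : ℝ}

lemma qnum_zero : qnum q 0 = 0 := by
  simp [qnum]

lemma qnum_pos (hq : |q| < 1) {n : ℕ} (hn : n ≠ 0) : 0 < qnum q n := by
  have hqn : q ^ n < 1 :=
    (le_abs_self _).trans_lt (by rw [abs_pow]; exact pow_lt_one₀ (abs_nonneg q) hq hn)
  exact div_pos (by linarith) (by linarith [(abs_lt.1 hq).2])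

lemma qfact_pos (hq : |q| < 1) : ∀ n, 0 < qfact q n
  | 0 => one_pos
  | n + 1 => mul_pos (qfact_pos hq n) (qnum_pos hq n.succ_ne_zero)

lemma qnum_eq_add_pow_mul_qnum_sub (hq : q ≠ 1) {k n : ℕ} (hk : k ≤ n) :
    qnum q n = qnum q k + q ^ k * qnum q (n - k) := by
  have h1q : 1 - q ≠ 0 := sub_ne_zero.2 (Ne.symm hq)
  unfold qnum
  field_simp
  rw [mul_sub, ← pow_add, Nat.add_sub_cancel' hk]
  ring

lemma tendsto_qnum (hq : |q| < 1) : Tendsto (qnum q) atTop (𝓝 (1 / (1 - q))) := by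
  have h := ((tendsto_const_nhds (x := (1 : ℝ))).sub
    (tendsto_pow_atTop_nhds_zero_of_abs_lt_one hq)).div_const (1 - q)
  rwa [sub_zero] at h

lemma summable_norm_pow_div_qfact {𝕜 : Type*} [RCLike 𝕜] (hq : |q| < 1) {x : 𝕜}
    (hx : ‖x‖ < 1 / (1 - q)) : Summable fun n => ‖x ^ n / (qfact q n : 𝕜)‖ := by
  have h1q : 0 < 1 - q := by linarith [(abs_lt.1 hq).2]
  have hR : 0 < 1 / (1 - q) := one_div_pos.2 h1q
  have hlim : Tendsto (fun n => ‖x‖ / qnum q (n + 1)) atTop (𝓝 (‖x‖ / (1 / (1 - q)))) :=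
    tendsto_const_nhds.div ((tendsto_qnum hq).comp (tendsto_add_atTop_nat 1)) hR.ne'
  obtain ⟨r, hxr, hr1⟩ := _root_.exists_between ((div_lt_one hR).2 hx)
  refine summable_of_ratio_norm_eventually_le hr1 ?_
  filter_upwards [hlim.eventually (eventually_le_nhds hxr)] with n hn
  have hqnum := qnum_pos hq n.succ_ne_zero
  have hstep : x ^ (n + 1) / (qfact q (n + 1) : 𝕜) =
      x / (qnum q (n + 1) : 𝕜) * (x ^ n / (qfact q n : 𝕜)) := by
    have := (qfact_pos hq n).ne'
    rw [qfact, pow_succ]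
    push_cast
    field_simp
  rw [norm_norm, norm_norm, hstep, norm_mul, norm_div, RCLike.norm_ofReal, abs_of_pos hqnum]
  exact mul_le_mul_of_nonneg_right hn (norm_nonneg _)

lemma qbinomial_alternating_sum_eq_zero (hq : |q| < 1) {n : ℕ} (hn : n ≠ 0) :
    ∑ k ∈ range (n + 1), (-1 : ℝ) ^ k * q ^ k.choose 2 / (qfact q k * qfact q (n - k)) = 0 := by
  set t : ℕ → ℝ := fun k => (-1 : ℝ) ^ k * q ^ k.choose 2 / (qfact q k * qfact q (n - k))
    with ht
  have hsplit : ∀ k ∈ range (n + 1),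
      t k * qnum q n = t k * qnum q k + t k * q ^ k * qnum q (n - k) := by
    intro k hk
    rw [qnum_eq_add_pow_mul_qnum_sub (abs_lt.1 hq).2.ne (Nat.lt_succ_iff.1 (mem_range.1 hk))]
    ring
  have hcancel : ∀ j ∈ range n,
      t (j + 1) * qnum q (j + 1) + t j * q ^ j * qnum q (n - j) = 0 := by
    intro j hj
    have hnj : n - j = n - (j + 1) + 1 := by have := mem_range.1 hj; omega
    have hchoose : (j + 1).choose 2 = j.choose 2 + j := by
      rw [Nat.choose_succ_succ', Nat.choose_one_right, add_comm]
    have := (qfact_pos hq j).ne'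
    have := (qfact_pos hq (n - (j + 1))).ne'
    have := (qnum_pos hq j.succ_ne_zero).ne'
    have := (qnum_pos hq (n - (j + 1)).succ_ne_zero).ne'
    simp only [ht, hnj, qfact, hchoose, pow_add, pow_succ]
    field_simp
    ring
  have hsum : (∑ k ∈ range (n + 1), t k) * qnum q n = 0 := by
    rw [sum_mul, sum_congr rfl hsplit, sum_add_distrib, sum_range_succ',
      sum_range_succ (fun k => t k * q ^ k * qnum q (n - k))]
    simp only [qnum_zero, Nat.sub_self, mul_zero, add_zero, ← sum_add_distrib]
    exact sum_eq_zero hcancel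
  exact (mul_eq_zero.1 hsum).resolve_right (qnum_pos hq hn).ne'

end QFactorial

section SecondQExp

variable {𝕜 : Type*} [RCLike 𝕜] {q : ℝ}

lemma norm_second_qexp_term_le (hq : |q| ≤ 1) (x : 𝕜) (n m : ℕ) :
    ‖(-1 : 𝕜) ^ n * (q : 𝕜) ^ m * x ^ n / (qfact q n : 𝕜)‖ ≤ ‖x ^ n / (qfact q n : 𝕜)‖ := by
  rw [mul_div_assoc, norm_mul, norm_mul, norm_pow, norm_neg, norm_one, one_pow, one_mul,
    norm_pow, RCLike.norm_ofReal]
  exact mul_le_of_le_one_left (norm_nonneg _) (pow_le_one₀ (abs_nonneg q) hq)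

lemma sum_range_second_qexp_term_mul_qexp_term_eq_zero (hq : |q| < 1) (x : 𝕜) {n : ℕ}
    (hn : n ≠ 0) :
    ∑ k ∈ range (n + 1), (-1 : 𝕜) ^ k * (q : 𝕜) ^ (k * (k - 1) / 2) * x ^ k / (qfact q k : 𝕜) *
      (x ^ (n - k) / (qfact q (n - k) : 𝕜)) = 0 := by
  have hterm : ∀ k ∈ range (n + 1),
      (-1 : 𝕜) ^ k * (q : 𝕜) ^ (k * (k - 1) / 2) * x ^ k / (qfact q k : 𝕜) *
        (x ^ (n - k) / (qfact q (n - k) : 𝕜)) =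
      x ^ n * (((-1 : ℝ) ^ k * q ^ k.choose 2 / (qfact q k * qfact q (n - k)) : ℝ) : 𝕜) := by
    intro k hk
    rw [← pow_mul_pow_sub x (Nat.lt_succ_iff.1 (mem_range.1 hk)), ← Nat.choose_two_right]
    push_cast
    ring
  rw [sum_congr rfl hterm, ← mul_sum, ← RCLike.ofReal_sum,
    qbinomial_alternating_sum_eq_zero hq hn, RCLike.ofReal_zero, mul_zero]

end SecondQExp

/-- for `‖w‖ < R = 1/(1-q)` the series
`E_q(-w) = ∑ (-1)^n q^{n(n-1)/2} w^n/[n]_q!` converges absolutely and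
`e_q(w) · E_q(-w) = 1`. -/
theorem qexp_mul_second_qexp_eq_one (q : ℝ) (hq0 : 0 < q) (hq1 : q < 1) (w : ℂ)
    (hw : ‖w‖ < 1 / (1 - q)) :
    Summable (fun n : ℕ =>
      ‖(-1 : ℂ) ^ n * (q : ℂ) ^ (n * (n - 1) / 2) * w ^ n / (qfact q n : ℂ)‖) ∧
    qexC q w *
      (∑' n : ℕ, (-1 : ℂ) ^ n * (q : ℂ) ^ (n * (n - 1) / 2) * w ^ n / (qfact q n : ℂ)) = 1 := by
  have hq : |q| < 1 := abs_lt.2 ⟨by linarith, hq1⟩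
  have hexp : Summable fun n => ‖w ^ n / (qfact q n : ℂ)‖ := summable_norm_pow_div_qfact hq hw
  have hsecond : Summable fun n : ℕ =>
      ‖(-1 : ℂ) ^ n * (q : ℂ) ^ (n * (n - 1) / 2) * w ^ n / (qfact q n : ℂ)‖ :=
    hexp.of_nonneg_of_le (fun _ => norm_nonneg _) fun n => norm_second_qexp_term_le hq.le w n _
  refine ⟨hsecond, ?_⟩
  rw [qexC, mul_comm, tsum_mul_tsum_eq_tsum_sum_range_of_summable_norm hsecond hexp,
    tsum_eq_single 0]
  · simp [qfact]
  · exact fun n hn => sum_range_second_qexp_term_mul_qexp_term_eq_zero hq w hn
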